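/- arXiv:1710.07574 — 2 statements merged into one kernel-verified Lean document; each statement's English description precedes it below -/
import Mathlib

section
/- Let f : ℝⁿ → ℝⁿ be continuously differentiable with f(0) = 0, let D be an open set containing 0, and let V : ℝⁿ → ℝ be continuously differentiable with V(0) = 0, V(x) > 0 for all x ≠ 0 in D, and ∇V(x)·f(x) < 0 for all x ≠ 0 in D. If β > 0 is such that the sublevel set Ω_β = {x ∈ D : V(x) ≤ β} is compact and contained in D, then Ω_β is positively invariant under the flow of ẋ = f(x). -/
/-!
Along a trajectory `x`, the function `t ↦ V (x t)` has derivative `⟪∇V (x t), f (x t)⟫`, which is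
negative whenever `x t` lies on the level set `V = β` (such a point is not the equilibrium since
`V 0 = 0 < β`). So a trajectory sitting in `Ω` at time `t` stays in `Ω` for a short time after `t`:
in the interior of the sublevel set by continuity, on its boundary because `V` strictly decreases.
As `Ω` is closed, real induction on `[0, t]` then gives invariance for all positive times.
-/

open Filter Topology Set
open scoped RealInnerProductSpace Gradient

theorem HasDerivAt.eventually_nhdsGT_lt {g : ℝ → ℝ} {g' t : ℝ} (hg : HasDerivAt g g' t)
    (hg' : g' < 0) : ∀ᶠ s in 𝓝[>] t, g s < g t := by
  filter_upwards [hg.hasDerivWithinAt.limsup_slope_le' (lt_irrefl t) hg', self_mem_nhdsWithin]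
    with s hs hts
  exact (slope_neg_iff_of_le (le_of_lt hts)).1 hs

theorem HasDerivAt.eventually_nhdsGT_lt_of_le {g : ℝ → ℝ} {g' t β : ℝ} (hg : HasDerivAt g g' t)
    (hle : g t ≤ β) (hneg : g t = β → g' < 0) : ∀ᶠ s in 𝓝[>] t, g s < β := by
  rcases hle.lt_or_eq with hlt | heq
  · exact nhdsWithin_le_nhds (hg.continuousAt.eventually (eventually_lt_nhds hlt))
  · exact heq ▸ hg.eventually_nhdsGT_lt (hneg heq)

theorem forall_mem_of_mem_nhdsGT {X : Type*} [TopologicalSpace X] {x : ℝ → X} (hx : Continuous x)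
    {Ω : Set X} (hΩ : IsClosed Ω) {a : ℝ} (ha : x a ∈ Ω)
    (hstep : ∀ t, a ≤ t → x t ∈ Ω → x ⁻¹' Ω ∈ 𝓝[>] t) : ∀ t, a ≤ t → x t ∈ Ω := fun _ ht =>
  ((hΩ.preimage hx).inter isClosed_Icc).Icc_subset_of_forall_mem_nhdsWithin ha
    (fun s hs => hstep s hs.2.1 hs.1) ⟨ht, le_rfl⟩

section InnerProductSpace

variable {E : Type*} [NormedAddCommGroup E] [InnerProductSpace ℝ E] [CompleteSpace E]

theorem DifferentiableAt.hasDerivAt_comp_inner_gradient {V : E → ℝ} {x : ℝ → E} {x' : E} {t : ℝ}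
    (hV : DifferentiableAt ℝ V (x t)) (hx : HasDerivAt x x' t) :
    HasDerivAt (V ∘ x) ⟪∇ V (x t), x'⟫ t := by
  rw [inner_gradient_left]
  exact hV.hasFDerivAt.comp_hasDerivAt t hx

theorem preimage_sublevel_mem_nhdsGT {f : E → E} {D : Set E} (hD : IsOpen D) {V : E → ℝ}
    (hV : Differentiable ℝ V) {β : ℝ} (hdecr : ∀ p ∈ D, V p = β → ⟪∇ V p, f p⟫ < 0)
    {x : ℝ → E} {t : ℝ} (hx : HasDerivAt x (f (x t)) t) (ht : x t ∈ {p ∈ D | V p ≤ β}) :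
    x ⁻¹' {p ∈ D | V p ≤ β} ∈ 𝓝[>] t := by
  have hD' : ∀ᶠ s in 𝓝[>] t, x s ∈ D :=
    nhdsWithin_le_nhds (hx.continuousAt.eventually_mem (hD.mem_nhds ht.1))
  have hV' : ∀ᶠ s in 𝓝[>] t, V (x s) < β :=
    ((hV _).hasDerivAt_comp_inner_gradient hx).eventually_nhdsGT_lt_of_le ht.2 (hdecr _ ht.1)
  filter_upwards [hD', hV'] with s hsD hsV using ⟨hsD, hsV.le⟩

end InnerProductSpace

theorem stmt_0_general {n : ℕ} (f : EuclideanSpace ℝ (Fin n) → EuclideanSpace ℝ (Fin n))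
    (D : Set (EuclideanSpace ℝ (Fin n))) (hD : IsOpen D)
    (V : EuclideanSpace ℝ (Fin n) → ℝ) (hV : ContDiff ℝ 1 V) (hV0 : V 0 = 0)
    (hVdot : ∀ x ∈ D, x ≠ 0 → (inner ℝ (gradient V x) (f x) : ℝ) < 0)
    (β : ℝ) (hβ : 0 < β)
    (Ω : Set (EuclideanSpace ℝ (Fin n))) (hΩ : Ω = {x ∈ D | V x ≤ β})
    (hΩc : IsCompact Ω) :
    ∀ x : ℝ → EuclideanSpace ℝ (Fin n),
      (∀ t, HasDerivAt x (f (x t)) t) → x 0 ∈ Ω → ∀ t, 0 ≤ t → x t ∈ Ω := by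
  intro x hx hx0
  subst hΩ
  have hdecr : ∀ p ∈ D, V p = β → ⟪∇ V p, f p⟫ < 0 := by
    rintro p hp hVp
    refine hVdot p hp ?_
    rintro rfl
    linarith
  exact forall_mem_of_mem_nhdsGT (continuous_iff_continuousAt.2 fun t => (hx t).continuousAt)
    hΩc.isClosed hx0 fun t _ ht =>
      preimage_sublevel_mem_nhdsGT hD (hV.differentiable one_ne_zero) hdecr (hx t) ht

/-- Lyapunov sublevel sets are positively invariant. -/
theorem stmt_0 {n : ℕ} (f : EuclideanSpace ℝ (Fin n) → EuclideanSpace ℝ (Fin n))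
    (hf : ContDiff ℝ 1 f) (hf0 : f 0 = 0)
    (D : Set (EuclideanSpace ℝ (Fin n))) (hD : IsOpen D) (h0D : (0 : EuclideanSpace ℝ (Fin n)) ∈ D)
    (V : EuclideanSpace ℝ (Fin n) → ℝ) (hV : ContDiff ℝ 1 V) (hV0 : V 0 = 0)
    (hVpos : ∀ x ∈ D, x ≠ 0 → 0 < V x)
    (hVdot : ∀ x ∈ D, x ≠ 0 → (inner ℝ (gradient V x) (f x) : ℝ) < 0)
    (β : ℝ) (hβ : 0 < β)
    (Ω : Set (EuclideanSpace ℝ (Fin n))) (hΩ : Ω = {x ∈ D | V x ≤ β})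
    (hΩc : IsCompact Ω) (hΩD : Ω ⊆ D) :
    ∀ x : ℝ → EuclideanSpace ℝ (Fin n),
      (∀ t, HasDerivAt x (f (x t)) t) → x 0 ∈ Ω → ∀ t, 0 ≤ t → x t ∈ Ω :=
  stmt_0_general f D hD V hV hV0 hVdot β hβ Ω hΩ hΩc
end

section
/- Let p(z) = zᵀAz with A symmetric positive definite and let V be continuous with V(0) = 0. The optimal value β* = sup{β : {p ≤ β} ⊆ {V ≤ 1}} equals inf{p(z) : V(z) = 1} when {V ≤ 1} is compact with boundary {V = 1}; i.e., the largest ellipsoid level set inscribed in the unit Lyapunov sublevel set touches its boundary. -/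
/-!
Let `z₀` minimise `p` on the compact level set `{V = 1}`, with value `m > 0`. A point outside
`{V ≤ 1}` can be scaled down along its ray until it hits `{V = 1}`, and `p` shrinks quadratically
under this scaling, so `{p ≤ m} ⊆ {V ≤ 1}`. Conversely, if `{p ≤ β} ⊆ {V ≤ 1}` then the open set
`{p < β}` lies in the interior, so it misses the boundary point `z₀` and `β ≤ m`. When `{V = 1}`
is empty, `{V ≤ 1}` is clopen, hence everything, and both sides are the junk value `0`.
-/

open Matrix Set

lemma exists_mem_Ico_map_smul_eq {E : Type*} [TopologicalSpace E] [AddCommGroup E] [Module ℝ E]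
    [ContinuousSMul ℝ E] {V : E → ℝ} (hV : Continuous V) {c : ℝ} (hV0 : V 0 ≤ c) {z : E}
    (hz : c < V z) : ∃ t ∈ Ico (0 : ℝ) 1, V (t • z) = c := by
  have hcont : ContinuousOn (fun t : ℝ => V (t • z)) (Icc 0 1) :=
    (hV.comp (continuous_id.smul continuous_const)).continuousOn
  obtain ⟨t, ht, htc⟩ := intermediate_value_Icc zero_le_one hcont
    ⟨by simpa using hV0, by simpa using hz.le⟩
  refine ⟨t, ⟨ht.1, ht.2.lt_of_ne ?_⟩, htc⟩
  rintro rfl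
  simp only [one_smul] at htc
  exact hz.ne' htc

lemma sublevel_subset_of_le_on_level {E : Type*} [TopologicalSpace E] [AddCommGroup E]
    [Module ℝ E] [ContinuousSMul ℝ E] {V p : E → ℝ} (hV : Continuous V) (hV0 : V 0 ≤ 1)
    (hp : ∀ (t : ℝ) z, p (t • z) = t ^ 2 * p z) {m : ℝ} (hm : 0 < m)
    (hmin : ∀ z ∈ {z | V z = 1}, m ≤ p z) : {z | p z ≤ m} ⊆ {z | V z ≤ 1} := by
  intro z hz
  by_contra hVz
  obtain ⟨t, ⟨ht0, ht1⟩, htV⟩ := exists_mem_Ico_map_smul_eq hV hV0 (not_le.1 hVz)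
  have hle : m ≤ t ^ 2 * p z := hp t z ▸ hmin _ htV
  have ht2 : t ^ 2 < 1 := by nlinarith
  have hpz : p z ≤ m := hz
  nlinarith

lemma le_of_sublevel_subset_of_mem_frontier {X : Type*} [TopologicalSpace X] {p : X → ℝ}
    (hp : Continuous p) {S : Set X} {β : ℝ} (hβ : {z | p z ≤ β} ⊆ S) {z : X}
    (hz : z ∈ frontier S) : β ≤ p z := by
  have hsub : {z | p z < β} ⊆ interior S :=
    (isOpen_lt hp continuous_const).subset_interior_iff.2 fun x hx =>
      hβ (show p x ≤ β from le_of_lt hx)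
  exact not_lt.1 fun h => hz.2 (hsub h)

lemma dotProduct_mulVec_smul_self {n : Type*} [Fintype n] (A : Matrix n n ℝ) (t : ℝ)
    (z : n → ℝ) : (t • z) ⬝ᵥ A *ᵥ (t • z) = t ^ 2 * (z ⬝ᵥ A *ᵥ z) := by
  rw [mulVec_smul, smul_dotProduct, dotProduct_smul, smul_eq_mul, smul_eq_mul]
  ring

theorem stmt_17_general {n : ℕ} (A : Matrix (Fin n) (Fin n) ℝ) (hA : A.PosDef)
    (p : (Fin n → ℝ) → ℝ) (hp : ∀ z, p z = z ⬝ᵥ A.mulVec z)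
    (V : (Fin n → ℝ) → ℝ) (hV : Continuous V) (hV0 : V 0 = 0)
    (hcpt : IsCompact {z : Fin n → ℝ | V z ≤ 1})
    (hbd : frontier {z : Fin n → ℝ | V z ≤ 1} = {z : Fin n → ℝ | V z = 1}) :
    sSup {β : ℝ | {z : Fin n → ℝ | p z ≤ β} ⊆ {z : Fin n → ℝ | V z ≤ 1}} =
      sInf (p '' {z : Fin n → ℝ | V z = 1}) := by
  obtain rfl : p = fun z => z ⬝ᵥ A *ᵥ z := funext hp
  have hp_cont : Continuous fun z : Fin n → ℝ => z ⬝ᵥ A *ᵥ z :=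
    continuous_id.dotProduct (continuous_const.matrix_mulVec continuous_id)
  rcases eq_empty_or_nonempty {z : Fin n → ℝ | V z = 1} with hF | hF
  · have hS : {z : Fin n → ℝ | V z ≤ 1} = univ :=
      (isClopen_iff_frontier_eq_empty.2 (hbd.trans hF)).eq_univ ⟨0, by simp [hV0]⟩
    simp [hS, hF]
  have hFc : IsCompact {z : Fin n → ℝ | V z = 1} :=
    hcpt.of_isClosed_subset (hbd ▸ isClosed_frontier) fun _ hz => hz.le
  obtain ⟨z₀, hz₀, hmin⟩ := hFc.exists_isMinOn hF hp_cont.continuousOn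
  have hz₀_ne : z₀ ≠ 0 := by
    rintro rfl
    simp [hV0] at hz₀
  have hgreatest : IsGreatest {β : ℝ | {z | z ⬝ᵥ A *ᵥ z ≤ β} ⊆ {z | V z ≤ 1}} (z₀ ⬝ᵥ A *ᵥ z₀) :=
    ⟨sublevel_subset_of_le_on_level hV (hV0.trans_le zero_le_one)
        (dotProduct_mulVec_smul_self A) (hA.dotProduct_mulVec_pos hz₀_ne) hmin,
      fun _ hβ => le_of_sublevel_subset_of_mem_frontier hp_cont hβ (hbd ▸ hz₀)⟩
  have hleast : IsLeast ((fun z => z ⬝ᵥ A *ᵥ z) '' {z | V z = 1}) (z₀ ⬝ᵥ A *ᵥ z₀) :=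
    ⟨mem_image_of_mem _ hz₀, forall_mem_image.2 hmin⟩
  rw [hgreatest.csSup_eq, hleast.csInf_eq]

/-- The largest ellipsoid level set {p ≤ β} inscribed in the compact unit
Lyapunov sublevel set {V ≤ 1} touches its boundary: the optimal β equals inf{p(z) : V(z)=1}. -/
theorem stmt_17 {n : ℕ} (A : Matrix (Fin n) (Fin n) ℝ) (hAs : A.IsSymm) (hA : A.PosDef)
    (p : (Fin n → ℝ) → ℝ) (hp : ∀ z, p z = z ⬝ᵥ A.mulVec z)
    (V : (Fin n → ℝ) → ℝ) (hV : Continuous V) (hV0 : V 0 = 0)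
    (hcpt : IsCompact {z : Fin n → ℝ | V z ≤ 1})
    (hbd : frontier {z : Fin n → ℝ | V z ≤ 1} = {z : Fin n → ℝ | V z = 1})
    (h0 : (0 : Fin n → ℝ) ∈ interior {z : Fin n → ℝ | V z ≤ 1}) :
    sSup {β : ℝ | {z : Fin n → ℝ | p z ≤ β} ⊆ {z : Fin n → ℝ | V z ≤ 1}} =
      sInf (p '' {z : Fin n → ℝ | V z = 1}) :=
  stmt_17_general A hA p hp V hV hV0 hcpt hbd
end
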